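/- Let R ∈ ℝ^{s×s} be upper triangular with entries satisfying |r_{jk}| ≤ C_j M_{j-1} (ΔT)^{j-1} for k ≥ j, where C_j, M_{j-1} ≥ 0 are constants and 0 < ΔT. Then the (j+1)-th largest singular value of R satisfies σ_{j+1} ≤ √(s−j) · √(‖R_j‖_1 ‖R_j‖_∞) where R_j is R with the first j rows removed, and in particular σ_{j+1} ≤ √(s−j) · (s) · max_{i>j} C_i M_{i-1} (ΔT)^{i-1}. -/

import Mathlib

/-!
`σ_{j+1}²` is the `(j+1)`-th largest eigenvalue of `RᵀR`. By the easy half of the Courant–Fischer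
min-max principle it is at most `‖Rx‖² / ‖x‖²` for some `x ≠ 0` satisfying the `j` linear
conditions `(Rx)₀ = ⋯ = (Rx)_{j-1} = 0`. For such `x`, `‖Rx‖ = ‖R_j x‖`, and the Schur test
`‖R_j x‖² ≤ ‖R_j‖₁ ‖R_j‖_∞ ‖x‖²` gives the first bound (already without the factor `√(s-j) ≥ 1`).
Since `R` is upper triangular, every entry of row `i` is bounded by `C_i M_i ΔT^i`, so every entry
of `R_j` is bounded by the supremum `K` over rows `i ≥ j`, and both norms of `R_j` by `s K`.
-/

/-- The spectral norm (largest singular value) of a real matrix,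
realized as the operator norm of the induced map between Euclidean spaces. -/
noncomputable def spectralNorm' {m n : ℕ} (A : Matrix (Fin m) (Fin n) ℝ) : ℝ :=
  ‖LinearMap.toContinuousLinearMap (Matrix.toEuclideanLin A)‖

/-- `singularValue A k` is the `(k+1)`-th largest singular value of `A`
(`k` is 0-indexed, so `singularValue A 0 = σ_1` is the largest one):
the square roots of the eigenvalues of `Aᴴ * A`, sorted in decreasing order. -/
noncomputable def singularValue {m n : ℕ} (A : Matrix (Fin m) (Fin n) ℝ) (k : Fin n) : ℝ :=
  Real.sqrt ((Matrix.isHermitian_conjTranspose_mul_self A).eigenvalues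
    (Tuple.sort (Matrix.isHermitian_conjTranspose_mul_self A).eigenvalues k.rev))


/-- `‖A‖_1`: the maximum absolute column sum of a real matrix. -/
noncomputable def colSumNorm {m n : ℕ} (A : Matrix (Fin m) (Fin n) ℝ) : ℝ :=
  ⨆ j : Fin n, ∑ i : Fin m, |A i j|

/-- `‖A‖_∞`: the maximum absolute row sum of a real matrix. -/
noncomputable def rowSumNorm {m n : ℕ} (A : Matrix (Fin m) (Fin n) ℝ) : ℝ :=
  ⨆ i : Fin m, ∑ j : Fin n, |A i j|

open Matrix

namespace Matrix.IsHermitian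

variable {𝕜 : Type*} [RCLike 𝕜]

lemma eigenvectorBasis_repr_toEuclideanLin {n : Type*} [Fintype n] [DecidableEq n]
    {A : Matrix n n 𝕜} (hA : A.IsHermitian) (x : EuclideanSpace 𝕜 n) (i : n) :
    hA.eigenvectorBasis.repr (toEuclideanLin A x) i =
      hA.eigenvalues i * hA.eigenvectorBasis.repr x i := by
  have hv : toEuclideanLin A (hA.eigenvectorBasis i) =
      (hA.eigenvalues i : 𝕜) • hA.eigenvectorBasis i := by
    ext1
    rw [toLpLin_apply, WithLp.ofLp_toLp, hA.mulVec_eigenvectorBasis, WithLp.ofLp_smul,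
      RCLike.real_smul_eq_coe_smul (K := 𝕜)]
  rw [OrthonormalBasis.repr_apply_apply, OrthonormalBasis.repr_apply_apply,
    ← isSymmetric_toEuclideanLin_iff.mpr hA, hv, inner_smul_left, RCLike.conj_ofReal]

lemma mul_norm_sq_le_re_inner_toEuclideanLin {n : Type*} [Fintype n] [DecidableEq n]
    {A : Matrix n n 𝕜} (hA : A.IsHermitian) {μ : ℝ} {x : EuclideanSpace 𝕜 n}
    (h : ∀ i, hA.eigenvectorBasis.repr x i ≠ 0 → μ ≤ hA.eigenvalues i) :
    μ * ‖x‖ ^ 2 ≤ RCLike.re (inner 𝕜 x (toEuclideanLin A x)) := by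
  rw [← hA.eigenvectorBasis.repr.norm_map, EuclideanSpace.norm_sq_eq,
    ← hA.eigenvectorBasis.repr.inner_map_map, PiLp.inner_apply, map_sum, Finset.mul_sum]
  refine Finset.sum_le_sum fun i _ => ?_
  rw [eigenvectorBasis_repr_toEuclideanLin, RCLike.inner_apply', mul_left_comm, RCLike.conj_mul,
    ← RCLike.ofReal_pow, ← RCLike.ofReal_mul, RCLike.ofReal_re]
  by_cases hi : hA.eigenvectorBasis.repr x i = 0
  · simp [hi]
  · exact mul_le_mul_of_nonneg_right (h i hi) (sq_nonneg _)

/-- The eigenvectors of the `k + 1` largest eigenvalues span a space of dimension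
`k + 1 > finrank V`, which therefore meets `ker L`. -/
lemma exists_ne_zero_map_eq_zero_and_eigenvalue_mul_norm_sq_le {n : ℕ}
    {A : Matrix (Fin n) (Fin n) 𝕜} (hA : A.IsHermitian) (k : Fin n)
    {V : Type*} [AddCommGroup V] [Module 𝕜 V] [FiniteDimensional 𝕜 V]
    (L : EuclideanSpace 𝕜 (Fin n) →ₗ[𝕜] V) (hL : Module.finrank 𝕜 V ≤ k) :
    ∃ x ≠ 0, L x = 0 ∧ hA.eigenvalues (Tuple.sort hA.eigenvalues k.rev) * ‖x‖ ^ 2 ≤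
      RCLike.re (inner 𝕜 x (toEuclideanLin A x)) := by
  set σ := Tuple.sort hA.eigenvalues
  let e : {m : Fin n // k.rev ≤ m} → Fin n := fun m => σ m
  have he : Function.Injective e := σ.injective.comp Subtype.val_injective
  let Φ : ({m : Fin n // k.rev ≤ m} → 𝕜) →ₗ[𝕜] EuclideanSpace 𝕜 (Fin n) :=
    hA.eigenvectorBasis.repr.symm.toLinearMap ∘ₗ (WithLp.linearEquiv 2 𝕜 _).symm.toLinearMap ∘ₗ
      Function.ExtendByZero.linearMap 𝕜 e
  have hrepr : ∀ c, hA.eigenvectorBasis.repr (Φ c) = WithLp.toLp 2 (Function.extend e c 0) :=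
    fun c => hA.eigenvectorBasis.repr.apply_symm_apply _
  have hcard : Fintype.card {m : Fin n // k.rev ≤ m} = k + 1 := by
    simp only [Fintype.card_subtype, Finset.filter_le_eq_Ici, Fin.card_Ici, Fin.val_rev]
    omega
  obtain ⟨c, hc, hc0⟩ := Submodule.exists_mem_ne_zero_of_ne_bot
    (LinearMap.ker_ne_bot_of_finrank_lt (f := L ∘ₗ Φ)
      (by rw [Module.finrank_fintype_fun_eq_card, hcard]; omega))
  refine ⟨Φ c, fun h => hc0 ?_, hc, hA.mul_norm_sq_le_re_inner_toEuclideanLin fun i hi => ?_⟩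
  · funext m
    simpa [hrepr, he.extend_apply] using
      congrArg (fun y => hA.eigenvectorBasis.repr y (e m)) h
  · rw [hrepr, WithLp.ofLp_toLp] at hi
    by_cases hm : ∃ m, e m = i
    · obtain ⟨m, rfl⟩ := hm
      exact Tuple.monotone_sort hA.eigenvalues m.2
    · exact absurd (Function.extend_apply' _ _ _ hm) hi

end Matrix.IsHermitian

lemma inner_toEuclideanLin_conjTranspose_mul_self {𝕜 : Type*} [RCLike 𝕜] {m n : Type*}
    [Fintype m] [DecidableEq m] [Fintype n] [DecidableEq n] (R : Matrix m n 𝕜)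
    (x : EuclideanSpace 𝕜 n) :
    inner 𝕜 x (toEuclideanLin (Rᴴ * R) x) = (‖toEuclideanLin R x‖ ^ 2 : ℝ) := by
  rw [toLpLin_mul_same, LinearMap.comp_apply, toEuclideanLin_conjTranspose_eq_adjoint,
    LinearMap.adjoint_inner_right, inner_self_eq_norm_sq_to_K, RCLike.ofReal_pow]

lemma singularValue_le_sqrt {m n : ℕ} (R : Matrix (Fin m) (Fin n) ℝ) (k : Fin n) {B : ℝ}
    (h : ∀ x : EuclideanSpace ℝ (Fin n), (∀ u : Fin m, (u : ℕ) < k → toEuclideanLin R x u = 0) →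
      ‖toEuclideanLin R x‖ ^ 2 ≤ B * ‖x‖ ^ 2) :
    singularValue R k ≤ √B := by
  let L : EuclideanSpace ℝ (Fin n) →ₗ[ℝ] ({u : Fin m // (u : ℕ) < k} → ℝ) :=
    (LinearMap.pi fun u =>
      (LinearMap.proj u.1).comp (WithLp.linearEquiv 2 ℝ (Fin m → ℝ)).toLinearMap) ∘ₗ
        toEuclideanLin R
  have hL : Module.finrank ℝ ({u : Fin m // (u : ℕ) < k} → ℝ) ≤ k := by
    rw [Module.finrank_fintype_fun_eq_card]
    simpa using Fintype.card_le_of_injective (fun u => (⟨u.1, u.2⟩ : Fin k))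
      fun u v huv => Subtype.ext (Fin.ext (Fin.mk.inj_iff.mp huv))
  obtain ⟨x, hx0, hLx, hray⟩ := IsHermitian.exists_ne_zero_map_eq_zero_and_eigenvalue_mul_norm_sq_le
    (isHermitian_conjTranspose_mul_self R) k L hL
  rw [inner_toEuclideanLin_conjTranspose_mul_self, RCLike.ofReal_re] at hray
  have hx : 0 < ‖x‖ ^ 2 := by positivity
  exact Real.sqrt_le_sqrt
    (le_of_mul_le_mul_right (hray.trans (h x fun u hu => congrFun hLx ⟨u, hu⟩)) hx)

lemma sq_mulVec_apply_le {m n : Type*} [Fintype n] (A : Matrix m n ℝ) (x : n → ℝ) (i : m) :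
    (A *ᵥ x) i ^ 2 ≤ (∑ k, |A i k|) * ∑ k, |A i k| * x k ^ 2 :=
  Finset.sum_sq_le_sum_mul_sum_of_sq_le_mul _ (fun _ _ => abs_nonneg _)
    (fun _ _ => by positivity) fun k _ => by rw [mul_pow, ← mul_assoc, ← sq, sq_abs]

section SumNorms

variable {m n : ℕ}

lemma sum_abs_le_colSumNorm (A : Matrix (Fin m) (Fin n) ℝ) (k : Fin n) :
    ∑ i, |A i k| ≤ colSumNorm A :=
  le_ciSup (f := fun k => ∑ i, |A i k|) (Set.finite_range _).bddAbove k

lemma sum_abs_le_rowSumNorm (A : Matrix (Fin m) (Fin n) ℝ) (i : Fin m) :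
    ∑ k, |A i k| ≤ rowSumNorm A :=
  le_ciSup (f := fun i => ∑ k, |A i k|) (Set.finite_range _).bddAbove i

lemma rowSumNorm_nonneg (A : Matrix (Fin m) (Fin n) ℝ) : 0 ≤ rowSumNorm A :=
  Real.iSup_nonneg fun _ => Finset.sum_nonneg fun _ _ => abs_nonneg _

/-- The Schur test. -/
lemma norm_toEuclideanLin_sq_le (A : Matrix (Fin m) (Fin n) ℝ) (x : EuclideanSpace ℝ (Fin n)) :
    ‖toEuclideanLin A x‖ ^ 2 ≤ colSumNorm A * rowSumNorm A * ‖x‖ ^ 2 := by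
  simp only [EuclideanSpace.real_norm_sq_eq, toLpLin_apply]
  calc ∑ i, (A *ᵥ x.ofLp) i ^ 2 ≤ ∑ i, rowSumNorm A * ∑ k, |A i k| * x k ^ 2 :=
        Finset.sum_le_sum fun i _ => (sq_mulVec_apply_le A x.ofLp i).trans <|
          mul_le_mul_of_nonneg_right (sum_abs_le_rowSumNorm A i)
            (Finset.sum_nonneg fun _ _ => by positivity)
    _ = rowSumNorm A * ∑ k, (∑ i, |A i k|) * x k ^ 2 := by
        simp only [← Finset.mul_sum, Finset.sum_mul]
        rw [Finset.sum_comm]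
    _ ≤ rowSumNorm A * ∑ k, colSumNorm A * x k ^ 2 := by
        gcongr with k _
        · exact rowSumNorm_nonneg A
        · exact sum_abs_le_colSumNorm A k
    _ = colSumNorm A * rowSumNorm A * ∑ k, x k ^ 2 := by
        rw [← Finset.mul_sum]
        ring

lemma sqrt_colSumNorm_mul_rowSumNorm_le {A : Matrix (Fin m) (Fin n) ℝ} {K : ℝ}
    (hA : ∀ i k, |A i k| ≤ K) (hK : 0 ≤ K) :
    √(colSumNorm A * rowSumNorm A) ≤ √((m : ℝ) * n) * K := by
  have hcol : colSumNorm A ≤ m * K := Real.iSup_le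
    (fun k => (Finset.sum_le_sum fun i _ => hA i k).trans_eq (by simp)) (by positivity)
  have hrow : rowSumNorm A ≤ n * K := Real.iSup_le
    (fun i => (Finset.sum_le_sum fun k _ => hA i k).trans_eq (by simp)) (by positivity)
  calc √(colSumNorm A * rowSumNorm A) ≤ √((m : ℝ) * n * K ^ 2) :=
        Real.sqrt_le_sqrt ((mul_le_mul hcol hrow (rowSumNorm_nonneg A) (by positivity)).trans_eq
          (by ring))
    _ = √((m : ℝ) * n) * K := by rw [Real.sqrt_mul' _ (sq_nonneg K), Real.sqrt_sq hK]

end SumNorms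

lemma singularValue_le_sqrt_colSumNorm_mul_rowSumNorm {m n j : ℕ} (R : Matrix (Fin m) (Fin n) ℝ)
    (hjn : j < n) (hjm : j ≤ m) :
    singularValue R ⟨j, hjn⟩ ≤
      √(colSumNorm (R.submatrix (fun i : Fin (m - j) => (⟨j + i.1, by omega⟩ : Fin m)) id) *
        rowSumNorm (R.submatrix (fun i : Fin (m - j) => (⟨j + i.1, by omega⟩ : Fin m)) id)) := by
  set e : Fin (m - j) → Fin m := fun i => ⟨j + i.1, by omega⟩
  have he : Function.Injective e := fun i i' h => Fin.ext (by simpa [e] using h)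
  refine singularValue_le_sqrt R _ fun x hx => ?_
  have hnorm : ‖toEuclideanLin R x‖ ^ 2 = ‖toEuclideanLin (R.submatrix e id) x‖ ^ 2 := by
    simp only [EuclideanSpace.real_norm_sq_eq]
    refine (Fintype.sum_of_injective e he _ _ (fun u hnot => ?_) fun i => rfl).symm
    have hu : (u : ℕ) < j := by
      by_contra! hju
      exact hnot ⟨⟨u - j, by omega⟩, Fin.ext (by simp only [e]; omega)⟩
    rw [hx u hu, sq, zero_mul]
  rw [hnorm]
  exact norm_toEuclideanLin_sq_le _ x

lemma abs_le_of_blockTriangular {ι : Type*} [LinearOrder ι] {R : Matrix ι ι ℝ} {b : ι → ℝ}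
    (hR : R.BlockTriangular id) (hb : ∀ i k, i ≤ k → |R i k| ≤ b i) (i k : ι) :
    |R i k| ≤ b i := by
  rcases lt_or_ge k i with hki | hik
  · rw [hR hki, abs_zero]
    exact (abs_nonneg _).trans (hb i i le_rfl)
  · exact hb i k hik

/-- let `R ∈ ℝ^{s×s}` be upper triangular with entries satisfying
`|r_{ik}| ≤ C_i · M_i · ΔT^i` for `k ≥ i` (0-indexed rows, so row `i` corresponds to
row `j = i+1` in the paper with bound `C_j M_{j-1} (ΔT)^{j-1}`), with nonnegative constants
and `0 < ΔT`. Then the `(j+1)`-th largest singular value of `R` satisfies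
`σ_{j+1} ≤ √(s−j) · √(‖R_j‖_1 ‖R_j‖_∞)`, where `R_j` is `R` with the first `j` rows removed,
and in particular `σ_{j+1} ≤ √(s−j) · s · max_{i>j} C_i M_{i-1} (ΔT)^{i-1}`. -/
theorem stmt5 (s j : ℕ) (hj1 : 1 ≤ j) (hj2 : j ≤ s - 1)
    (R : Matrix (Fin s) (Fin s) ℝ) (C M : Fin s → ℝ) (ΔT : ℝ)
    (hR : ∀ i k : Fin s, k < i → R i k = 0)
    (hbound : ∀ i k : Fin s, i ≤ k → |R i k| ≤ C i * M i * ΔT ^ (i : ℕ)) :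
    singularValue R ⟨j, by omega⟩ ≤
        Real.sqrt (s - j : ℕ) *
          Real.sqrt
            (colSumNorm (R.submatrix (fun i : Fin (s - j) => (⟨j + i.1, by omega⟩ : Fin s)) id) *
             rowSumNorm (R.submatrix (fun i : Fin (s - j) => (⟨j + i.1, by omega⟩ : Fin s)) id)) ∧
      singularValue R ⟨j, by omega⟩ ≤
        Real.sqrt (s - j : ℕ) * s *
          ⨆ i : {i : Fin s // j ≤ (i : ℕ)}, C i * M i * ΔT ^ (i.1 : ℕ) := by
  set Rj := R.submatrix (fun i : Fin (s - j) => (⟨j + i.1, by omega⟩ : Fin s)) id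
  set K := ⨆ i : {i : Fin s // j ≤ (i : ℕ)}, C i * M i * ΔT ^ (i.1 : ℕ)
  have hσ : singularValue R ⟨j, by omega⟩ ≤ √(colSumNorm Rj * rowSumNorm Rj) :=
    singularValue_le_sqrt_colSumNorm_mul_rowSumNorm R _ (by omega)
  have hRj : ∀ i k, |Rj i k| ≤ K := fun i k =>
    (abs_le_of_blockTriangular hR hbound _ k).trans <|
      le_ciSup (f := fun i : {i : Fin s // j ≤ (i : ℕ)} => C i * M i * ΔT ^ (i.1 : ℕ))
        (Set.finite_range _).bddAbove ⟨_, Nat.le_add_right j i⟩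
  have hK : 0 ≤ K := (abs_nonneg _).trans (hRj ⟨0, by omega⟩ ⟨0, by omega⟩)
  have hnorms : √(colSumNorm Rj * rowSumNorm Rj) ≤ s * K := by
    refine (sqrt_colSumNorm_mul_rowSumNorm_le hRj hK).trans (mul_le_mul_of_nonneg_right ?_ hK)
    refine Real.sqrt_le_iff.mpr ⟨by positivity, ?_⟩
    rw [sq]
    exact mul_le_mul_of_nonneg_right (by exact_mod_cast Nat.sub_le s j) (Nat.cast_nonneg s)
  have hsqrt : 1 ≤ √((s - j : ℕ) : ℝ) := Real.one_le_sqrt.mpr (by exact_mod_cast (by omega))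
  constructor
  · exact hσ.trans (le_mul_of_one_le_left (Real.sqrt_nonneg _) hsqrt)
  · calc singularValue R ⟨j, by omega⟩ ≤ s * K := hσ.trans hnorms
      _ ≤ √((s - j : ℕ) : ℝ) * (s * K) := le_mul_of_one_le_left (by positivity) hsqrt
      _ = √((s - j : ℕ) : ℝ) * s * K := by ring
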